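/- Let ρ_AB be a bipartite state of dimension m×n, let Ψ ∈ ℂ^m⊗ℂ^n⊗ℂ^d be a purification of ρ_AB, and let {(p_i, φ_i)}_{i=1}^k be a finite ensemble of unit vectors φ_i ∈ ℂ^m⊗ℂ^n with p_i ≥ 0 and Σ_{i=1}^k p_i φ_i φ_i* = ρ_AB, where k ≤ d. Then there exists a family {Π_i}_{i=1}^k of pairwise-orthogonal orthogonal projections on ℂ^d with Σ_{i=1}^k Π_i = I_d such that for every i, tr_C(ΨΨ*(I_{mn}⊗Π_i)) = p_i φ_i φ_i* (and in particular p_i = tr(ΨΨ*(I_{mn}⊗Π_i))). -/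

import Mathlib

open scoped Kronecker ComplexOrder Matrix

noncomputable section

/-- A quantum state (density matrix): positive semidefinite with trace 1. -/
def IsState {α : Type*} [Fintype α] (ρ : Matrix α α ℂ) : Prop :=
  ρ.PosSemidef ∧ ρ.trace = 1

/-- The rank-one matrix `ψ ψ*`. -/
def vecState {α : Type*} (ψ : α → ℂ) : Matrix α α ℂ :=
  fun i j => ψ i * star (ψ j)

/-- Kronecker product of two vectors. -/
def kronVec {α β : Type*} (a : α → ℂ) (b : β → ℂ) : α × β → ℂ :=
  fun p => a p.1 * b p.2

/-- Partial trace over the first tensor factor. -/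
def ptrace1 {α β : Type*} [Fintype α] (M : Matrix (α × β) (α × β) ℂ) : Matrix β β ℂ :=
  fun k k' => ∑ i, M (i, k) (i, k')

/-- Partial trace over the second tensor factor. -/
def ptrace2 {α β : Type*} [Fintype β] (M : Matrix (α × β) (α × β) ℂ) : Matrix α α ℂ :=
  fun i i' => ∑ k, M (i, k) (i', k)

/-- Partial trace over the third factor of a triple tensor product. -/
def ptrace3 {α β γ : Type*} [Fintype γ]
    (M : Matrix (α × β × γ) (α × β × γ) ℂ) : Matrix (α × β) (α × β) ℂ :=
  fun p q => ∑ t, M (p.1, (p.2, t)) (q.1, (q.2, t))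

/-- Partial trace over the middle factor of a triple tensor product. -/
def ptraceMid {α β γ : Type*} [Fintype β]
    (M : Matrix (α × β × γ) (α × β × γ) ℂ) : Matrix (α × γ) (α × γ) ℂ :=
  fun p q => ∑ k, M (p.1, (k, p.2)) (q.1, (k, q.2))

/-- Partial trace over the primed (A' and B') factors of a state on (A⊗A')⊗(B⊗B'). -/
def ptracePrimes {α α' β β' : Type*} [Fintype α'] [Fintype β']
    (M : Matrix ((α × α') × β × β') ((α × α') × β × β') ℂ) : Matrix (α × β) (α × β) ℂ :=
  fun p q => ∑ s, ∑ t, M ((p.1, s), (p.2, t)) ((q.1, s), (q.2, t))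

/-- Partial trace over the unprimed (A and B) factors of a state on (A⊗A')⊗(B⊗B'). -/
def ptraceUnprimed {α α' β β' : Type*} [Fintype α] [Fintype β]
    (M : Matrix ((α × α') × β × β') ((α × α') × β × β') ℂ) : Matrix (α' × β') (α' × β') ℂ :=
  fun p q => ∑ i, ∑ k, M ((i, p.1), (k, p.2)) ((i, q.1), (k, q.2))

/-- Von Neumann entropy: `S(ρ) = -∑ λᵢ log λᵢ` where λᵢ are the eigenvalues. -/
def vnEntropy {α : Type*} [Fintype α] [DecidableEq α] (ρ : Matrix α α ℂ) : ℝ :=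
  if h : ρ.IsHermitian then ∑ i, Real.negMulLog (h.eigenvalues i) else 0

/-- Entanglement of formation. -/
def EoF {α β : Type*} [Fintype α] [Fintype β] [DecidableEq α]
    (ρ : Matrix (α × β) (α × β) ℂ) : ℝ :=
  sInf {x : ℝ | ∃ (k : ℕ) (p : Fin k → ℝ) (ψ : Fin k → α × β → ℂ),
    (∀ i, 0 ≤ p i) ∧ (∀ i, star (ψ i) ⬝ᵥ ψ i = 1) ∧
    (∑ i, (p i : ℂ) • vecState (ψ i)) = ρ ∧
    x = ∑ i, p i * vnEntropy (ptrace2 (vecState (ψ i)))}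

/-- Separability of a bipartite state. -/
def IsSepState {α β : Type*} [Fintype α] [Fintype β]
    (ρ : Matrix (α × β) (α × β) ℂ) : Prop :=
  ∃ (k : ℕ) (p : Fin k → ℝ) (a : Fin k → α → ℂ) (b : Fin k → β → ℂ),
    (∀ i, 0 ≤ p i) ∧ (∑ i, p i) = 1 ∧
    (∀ i, star (a i) ⬝ᵥ a i = 1) ∧ (∀ i, star (b i) ⬝ᵥ b i = 1) ∧
    ρ = ∑ i, (p i : ℂ) • (vecState (a i) ⊗ₖ vecState (b i))

/-- Classical-classical bipartite states. -/
def IsCC {α β : Type*} [Fintype α] [Fintype β] [DecidableEq α] [DecidableEq β]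
    (ρ : Matrix (α × β) (α × β) ℂ) : Prop :=
  ∃ (a : α → α → ℂ) (b : β → β → ℂ) (p : α → β → ℝ),
    (∀ i j, star (a i) ⬝ᵥ a j = if i = j then 1 else 0) ∧
    (∀ i j, star (b i) ⬝ᵥ b j = if i = j then 1 else 0) ∧
    (∀ i j, 0 ≤ p i j) ∧ (∑ i, ∑ j, p i j) = 1 ∧
    ρ = ∑ i, ∑ j, (p i j : ℂ) • (vecState (a i) ⊗ₖ vecState (b j))

/-- Quantum-classical bipartite states (classical on the second factor). -/
def IsQC {α β : Type*} [Fintype α] [Fintype β] [DecidableEq β]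
    (ρ : Matrix (α × β) (α × β) ℂ) : Prop :=
  ∃ (b : β → β → ℂ) (σ : β → Matrix α α ℂ) (p : β → ℝ),
    (∀ i j, star (b i) ⬝ᵥ b j = if i = j then 1 else 0) ∧
    (∀ i, IsState (σ i)) ∧ (∀ i, 0 ≤ p i) ∧ (∑ i, p i) = 1 ∧
    ρ = ∑ i, (p i : ℂ) • (σ i ⊗ₖ vecState (b i))

/-- A POVM: finitely many positive semidefinite operators summing to the identity. -/
def IsPOVM {γ : Type*} [Fintype γ] [DecidableEq γ] {k : ℕ}
    (P : Fin k → Matrix γ γ ℂ) : Prop :=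
  (∀ i, (P i).PosSemidef) ∧ (∑ i, P i) = 1

/-- A von Neumann measurement: pairwise-orthogonal orthogonal projections summing to I. -/
def IsVNMeas {γ : Type*} [Fintype γ] [DecidableEq γ] {k : ℕ}
    (P : Fin k → Matrix γ γ ℂ) : Prop :=
  (∀ i, (P i).IsHermitian) ∧ (∀ i, P i * P i = P i) ∧
  (∀ i j, i ≠ j → P i * P j = 0) ∧ (∑ i, P i) = 1

/-- The term `pᵢ S(ρ_A^i)` for a measurement operator `P` on the second subsystem,
with the convention that the term vanishes when `pᵢ = 0`. -/
def measTerm {α β : Type*} [Fintype α] [Fintype β] [DecidableEq α] [DecidableEq β]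
    (ρ : Matrix (α × β) (α × β) ℂ) (P : Matrix β β ℂ) : ℝ :=
  if _h : (Matrix.trace (ρ * ((1 : Matrix α α ℂ) ⊗ₖ P))).re = 0 then 0
  else (Matrix.trace (ρ * ((1 : Matrix α α ℂ) ⊗ₖ P))).re *
    vnEntropy ((((Matrix.trace (ρ * ((1 : Matrix α α ℂ) ⊗ₖ P))).re : ℂ))⁻¹ •
      ptrace2 (ρ * ((1 : Matrix α α ℂ) ⊗ₖ P)))

/-- Quantum discord with POVM measurements on the second subsystem. -/
def discordP {α β : Type*} [Fintype α] [Fintype β] [DecidableEq α] [DecidableEq β]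
    (ρ : Matrix (α × β) (α × β) ℂ) : ℝ :=
  vnEntropy (ptrace1 ρ) - vnEntropy ρ +
    sInf {x : ℝ | ∃ (k : ℕ) (P : Fin k → Matrix β β ℂ),
      IsPOVM P ∧ x = ∑ i, measTerm ρ (P i)}

/-- Quantum discord with von Neumann measurements on the second subsystem. -/
def discordN {α β : Type*} [Fintype α] [Fintype β] [DecidableEq α] [DecidableEq β]
    (ρ : Matrix (α × β) (α × β) ℂ) : ℝ :=
  vnEntropy (ptrace1 ρ) - vnEntropy ρ +
    sInf {x : ℝ | ∃ (k : ℕ) (P : Fin k → Matrix β β ℂ),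
      IsVNMeas P ∧ x = ∑ i, measTerm ρ (P i)}

/-- The trace norm `‖X‖₁ = tr √(X* X)`. -/
def traceNorm {α : Type*} [Fintype α] [DecidableEq α] (X : Matrix α α ℂ) : ℝ :=
  (((Matrix.isHermitian_conjTranspose_mul_self X).eigenvectorUnitary : Matrix α α ℂ) *
    Matrix.diagonal (((↑) : ℝ → ℂ) ∘ (Real.sqrt ∘ (Matrix.isHermitian_conjTranspose_mul_self X).eigenvalues)) *
    (star (Matrix.isHermitian_conjTranspose_mul_self X).eigenvectorUnitary : Matrix α α ℂ)).trace.re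

/-- The Frobenius norm `‖X‖₂ = √(tr (X* X))`. -/
def frobNorm {α β : Type*} [Fintype α] [Fintype β] (X : Matrix α β ℂ) : ℝ :=
  Real.sqrt (Matrix.trace (Xᴴ * X)).re

/-- Matrix logarithm taken on the support (eigenvalue 0 is sent to 0). -/
def matLog {α : Type*} [Fintype α] [DecidableEq α] (A : Matrix α α ℂ) : Matrix α α ℂ :=
  if h : A.IsHermitian then
    (Matrix.IsHermitian.eigenvectorUnitary h : Matrix α α ℂ) *
      Matrix.diagonal (fun i => if h.eigenvalues i = 0 then 0
        else (Real.log (h.eigenvalues i) : ℂ)) *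
      (star (Matrix.IsHermitian.eigenvectorUnitary h) : Matrix α α ℂ)
  else 0

end

/-!
Reshape `Ψ` into the `mn × d` matrix `M`, so that `ρ_AB = M Mᴴ`, and let `N` be the `mn × k`
matrix with columns `√pᵢ φᵢ`, so that also `ρ_AB = N Nᴴ`. After padding `N` with zero columns to
width `d`, the two factorizations of `ρ_AB` differ by a unitary `U` of `ℂ^d`: the map `Nᴴ v ↦ Mᴴ v`
is a well-defined isometry on the range of `Nᴴ`, and it extends to all of `ℂ^d`. Conjugating the
coordinate projections (with all padding coordinates assigned to one outcome) by `U` gives the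
measurement.
-/

open Matrix
open scoped InnerProductSpace

section UnitaryFreedom

variable {𝕜 ι δ : Type*} [RCLike 𝕜] [Fintype ι] [DecidableEq ι] [Fintype δ] [DecidableEq δ]

theorem Matrix.toEuclideanCLM_symm_mem_unitary
    (L : EuclideanSpace 𝕜 δ →ₗᵢ[𝕜] EuclideanSpace 𝕜 δ) :
    (toEuclideanCLM (n := δ) (𝕜 := 𝕜)).symm L.toContinuousLinearMap ∈ unitary (Matrix δ δ 𝕜) :=
  Unitary.map_mem _ (Unitary.linearIsometryEquiv.symm (L.toLinearIsometryEquiv rfl)).prop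

theorem Matrix.inner_toEuclideanLin_toEuclideanLin (C : Matrix δ ι 𝕜)
    (v w : EuclideanSpace 𝕜 ι) :
    ⟪toEuclideanLin C v, toEuclideanLin C w⟫_𝕜 = ⟪v, toEuclideanLin (Cᴴ * C) w⟫_𝕜 := by
  rw [← LinearMap.adjoint_inner_right, ← toEuclideanLin_conjTranspose_eq_adjoint]
  simp

theorem Matrix.exists_unitary_eq_mul_of_conjTranspose_mul_self_eq {A B : Matrix δ ι 𝕜}
    (h : Aᴴ * A = Bᴴ * B) : ∃ U ∈ unitary (Matrix δ δ 𝕜), A = U * B := by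
  set fA := toEuclideanLin A
  set fB := toEuclideanLin B
  have hnorm (v : EuclideanSpace 𝕜 ι) : ‖fA v‖ = ‖fB v‖ := by
    rw [@norm_eq_sqrt_re_inner 𝕜, @norm_eq_sqrt_re_inner 𝕜, inner_toEuclideanLin_toEuclideanLin,
      inner_toEuclideanLin_toEuclideanLin, h]
  have hker : LinearMap.ker fB ≤ LinearMap.ker fA := fun v hv ↦ by
    rw [LinearMap.mem_ker] at hv ⊢
    rw [← norm_eq_zero, hnorm, hv, norm_zero]
  obtain ⟨L, hL⟩ :
      ∃ L : EuclideanSpace 𝕜 δ →ₗᵢ[𝕜] EuclideanSpace 𝕜 δ, ∀ v, L (fB v) = fA v := by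
    let L₀ : LinearMap.range fB →ₗ[𝕜] EuclideanSpace 𝕜 δ :=
      (LinearMap.ker fB).liftQ fA hker ∘ₗ fB.quotKerEquivRange.symm.toLinearMap
    have hL₀ (v : EuclideanSpace 𝕜 ι) : L₀ ⟨fB v, LinearMap.mem_range_self fB v⟩ = fA v := by
      simp [L₀, LinearMap.quotKerEquivRange_symm_apply_image]
    let L₀' : LinearMap.range fB →ₗᵢ[𝕜] EuclideanSpace 𝕜 δ :=
      ⟨L₀, by rintro ⟨_, v, rfl⟩; rw [hL₀, hnorm, Submodule.coe_norm]⟩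
    exact ⟨L₀'.extend, fun v ↦ (L₀'.extend_apply ⟨fB v, _⟩).trans (hL₀ v)⟩
  refine ⟨_, toEuclideanCLM_symm_mem_unitary L,
    toEuclideanLin.injective <| LinearMap.ext fun v ↦ ?_⟩
  have hU (x : δ → 𝕜) : (toEuclideanCLM (n := δ) (𝕜 := 𝕜)).symm L.toContinuousLinearMap *ᵥ x
      = (L (WithLp.toLp 2 x)).ofLp := by
    rw [← ofLp_toEuclideanCLM, StarAlgEquiv.apply_symm_apply]
    rfl
  rw [← hL, toLpLin_apply, toLpLin_apply, ← mulVec_mulVec, hU]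

end UnitaryFreedom

theorem Matrix.submatrix_one_mul_mul_conjTranspose {R κ δ : Type*} [Semiring R] [StarRing R]
    [Fintype δ] [DecidableEq δ] (e : κ → δ) (A : Matrix δ δ R) :
    (1 : Matrix δ δ R).submatrix e id * A * ((1 : Matrix δ δ R).submatrix e id)ᴴ
      = A.submatrix e e := by
  ext i j
  simp [mul_apply, one_apply]

section PartialTrace

variable {α β : Type*} [Fintype α] [Fintype β]

theorem ptrace2_vecState_mul_one_kronecker [DecidableEq α] (Ψ : α × β → ℂ)
    (A : Matrix β β ℂ) :
    ptrace2 (vecState Ψ * ((1 : Matrix α α ℂ) ⊗ₖ A))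
      = of (Function.curry Ψ) * Aᵀ * (of (Function.curry Ψ))ᴴ := by
  ext x y
  simp only [ptrace2, vecState, mul_apply, kroneckerMap_apply, one_apply, Fintype.sum_prod_type,
    of_apply, transpose_apply, conjTranspose_apply, Function.curry_apply, Finset.sum_mul]
  simp only [ite_mul, one_mul, zero_mul, mul_ite, mul_zero, Finset.sum_ite_irrel,
    Finset.sum_const_zero, Finset.sum_ite_eq', Finset.mem_univ, if_true]
  rw [Finset.sum_comm]
  exact Finset.sum_congr rfl fun _ _ ↦ Finset.sum_congr rfl fun _ _ ↦ by ring

theorem ptrace2_vecState [DecidableEq α] [DecidableEq β] (Ψ : α × β → ℂ) :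
    ptrace2 (vecState Ψ) = of (Function.curry Ψ) * (of (Function.curry Ψ))ᴴ := by
  simpa using ptrace2_vecState_mul_one_kronecker Ψ 1

theorem trace_ptrace2 (X : Matrix (α × β) (α × β) ℂ) : (ptrace2 X).trace = X.trace := by
  simp [trace, ptrace2, Fintype.sum_prod_type]

end PartialTrace

section VecState

variable {α κ : Type*}

theorem trace_vecState [Fintype α] (ψ : α → ℂ) : (vecState ψ).trace = star ψ ⬝ᵥ ψ := by
  simp [trace, vecState, dotProduct, mul_comm]

theorem vecState_smul (c : ℂ) (ψ : α → ℂ) : vecState (c • ψ) = (c * star c) • vecState ψ := by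
  ext x y
  simp [vecState]
  ring

theorem mul_diagonal_mul_conjTranspose_eq_sum_vecState [Fintype κ] [DecidableEq κ]
    (N : Matrix α κ ℂ) (w : κ → ℂ) :
    N * diagonal w * Nᴴ = ∑ j, w j • vecState fun x ↦ N x j := by
  ext x y
  rw [mul_apply]
  simp only [mul_diagonal, conjTranspose_apply, Matrix.sum_apply, Matrix.smul_apply, vecState,
    smul_eq_mul]
  exact Finset.sum_congr rfl fun _ _ ↦ by ring

end VecState

section VonNeumannMeasurement

variable {γ : Type*} [Fintype γ] [DecidableEq γ] {k : ℕ}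

theorem isVNMeas_diagonal_fiber (r : γ → Fin k) :
    IsVNMeas fun i ↦ diagonal fun t ↦ if r t = i then (1 : ℂ) else 0 := by
  refine ⟨fun i ↦ isHermitian_diagonal_iff.mpr fun t ↦ ?_, fun i ↦ ?_, fun i j hij ↦ ?_, ?_⟩
  · split_ifs <;> simp
  · rw [diagonal_mul_diagonal]
    congr 1 with t
    split_ifs <;> simp
  · rw [diagonal_mul_diagonal, ← diagonal_zero]
    congr 1 with t
    split_ifs with hi hj <;> simp_all
  · ext s t
    rw [Matrix.sum_apply, one_apply]
    split_ifs with hst <;> simp [hst]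

theorem IsVNMeas.unitary_conj {P : Fin k → Matrix γ γ ℂ} (hP : IsVNMeas P)
    {U : Matrix γ γ ℂ} (hU : U ∈ unitary (Matrix γ γ ℂ)) :
    IsVNMeas fun i ↦ U * P i * star U := by
  obtain ⟨hH, hI, hO, hS⟩ := hP
  have cancel (X : Matrix γ γ ℂ) : star U * (U * X) = X := by
    rw [← mul_assoc, Unitary.star_mul_self_of_mem hU, one_mul]
  refine ⟨fun i ↦ isHermitian_mul_mul_conjTranspose U (hH i), fun i ↦ ?_, fun i j hij ↦ ?_, ?_⟩
  · simp only [mul_assoc, cancel]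
    rw [← mul_assoc (P i), hI]
  · simp only [mul_assoc, cancel]
    rw [← mul_assoc (P i), hO i j hij, zero_mul, mul_zero]
  · rw [← Finset.sum_mul, ← Finset.mul_sum, hS, mul_one, Unitary.mul_star_self_of_mem hU]

theorem IsVNMeas.transpose {P : Fin k → Matrix γ γ ℂ} (hP : IsVNMeas P) :
    IsVNMeas fun i ↦ (P i)ᵀ := by
  obtain ⟨hH, hI, hO, hS⟩ := hP
  refine ⟨fun i ↦ (hH i).transpose, fun i ↦ ?_, fun i j hij ↦ ?_, ?_⟩
  · rw [← transpose_mul, hI]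
  · rw [← transpose_mul, hO j i (Ne.symm hij), transpose_zero]
  · rw [← transpose_sum, hS, transpose_one]

end VonNeumannMeasurement

theorem exists_isVNMeas_ptrace2_eq_vecState {α δ : Type*} [Fintype α] [DecidableEq α]
    [Fintype δ] [DecidableEq δ] {k : ℕ} {e : Fin k → δ} {r : δ → Fin k}
    (hre : Function.LeftInverse r e) (Ψ : α × δ → ℂ) (N : Matrix α (Fin k) ℂ)
    (hΨ : ptrace2 (vecState Ψ) = N * Nᴴ) :
    ∃ P : Fin k → Matrix δ δ ℂ, IsVNMeas P ∧
      ∀ i, ptrace2 (vecState Ψ * ((1 : Matrix α α ℂ) ⊗ₖ P i)) = vecState fun x ↦ N x i := by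
  set M := of (Function.curry Ψ) with hMdef
  set B := N * (1 : Matrix δ δ ℂ).submatrix e id
  have hB (A : Matrix δ δ ℂ) : B * A * Bᴴ = N * A.submatrix e e * Nᴴ := by
    rw [← submatrix_one_mul_mul_conjTranspose]
    simp only [B, conjTranspose_mul, Matrix.mul_assoc]
  have hgram : Mᴴᴴ * Mᴴ = Bᴴᴴ * Bᴴ := by
    have hBB := hB 1
    rw [Matrix.mul_one, submatrix_one _ hre.injective, Matrix.mul_one] at hBB
    rw [conjTranspose_conjTranspose, conjTranspose_conjTranspose, ← ptrace2_vecState, hΨ, hBB]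
  obtain ⟨U, hU, hMU⟩ := exists_unitary_eq_mul_of_conjTranspose_mul_self_eq hgram
  have hM : M = B * star U := by
    rw [← conjTranspose_conjTranspose M, hMU, conjTranspose_mul, conjTranspose_conjTranspose,
      star_eq_conjTranspose]
  set D : Fin k → Matrix δ δ ℂ := fun i ↦ diagonal fun t ↦ if r t = i then 1 else 0
  -- `1 ⊗ₖ P` acts on `Ψ` from the right, hence the transpose.
  refine ⟨fun i ↦ (U * D i * star U)ᵀ, ((isVNMeas_diagonal_fiber r).unitary_conj hU).transpose,
    fun i ↦ ?_⟩
  rw [ptrace2_vecState_mul_one_kronecker, transpose_transpose, ← hMdef, hM]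
  calc B * star U * (U * D i * star U) * (B * star U)ᴴ
      = B * D i * Bᴴ := by
        have hUU := Unitary.star_mul_self_of_mem hU
        rw [conjTranspose_mul, ← star_eq_conjTranspose (star U), star_star]
        simp only [Matrix.mul_assoc]
        rw [← Matrix.mul_assoc (star U) U, hUU, Matrix.one_mul, ← Matrix.mul_assoc (star U) U,
          hUU, Matrix.one_mul]
    _ = N * diagonal (fun j ↦ if j = i then (1 : ℂ) else 0) * Nᴴ := by
        rw [hB, submatrix_diagonal _ _ hre.injective]
        simp only [Function.comp_def, hre _]
    _ = vecState fun x ↦ N x i := by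
        simp [mul_diagonal_mul_conjTranspose_eq_sum_vecState]

theorem exists_vn_measurement_realizing_ensemble_general (m n d k : ℕ) (hk : k ≤ d)
    (ρAB : Matrix (Fin m × Fin n) (Fin m × Fin n) ℂ) (hρ : IsState ρAB)
    (Ψ : (Fin m × Fin n) × Fin d → ℂ)
    (hpur : ptrace2 (vecState Ψ) = ρAB)
    (p : Fin k → ℝ) (φ : Fin k → Fin m × Fin n → ℂ)
    (hp : ∀ i, 0 ≤ p i) (hφ : ∀ i, star (φ i) ⬝ᵥ φ i = 1)
    (hens : ∑ i, (p i : ℂ) • vecState (φ i) = ρAB) :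
    ∃ P : Fin k → Matrix (Fin d) (Fin d) ℂ,
      (∀ i, (P i).IsHermitian) ∧ (∀ i, P i * P i = P i) ∧
      (∀ i j, i ≠ j → P i * P j = 0) ∧ (∑ i, P i) = 1 ∧
      (∀ i, ptrace2 (vecState Ψ * ((1 : Matrix (Fin m × Fin n) (Fin m × Fin n) ℂ) ⊗ₖ P i))
        = (p i : ℂ) • vecState (φ i)) ∧
      (∀ i, Matrix.trace (vecState Ψ * ((1 : Matrix (Fin m × Fin n) (Fin m × Fin n) ℂ) ⊗ₖ P i))
        = (p i : ℂ)) := by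
  have : NeZero k := ⟨by rintro rfl; simpa [← hens] using hρ.2⟩
  set N : Matrix (Fin m × Fin n) (Fin k) ℂ := of fun x j ↦ (√(p j) : ℂ) * φ j x
  have hcol (i : Fin k) : vecState (fun x ↦ N x i) = (p i : ℂ) • vecState (φ i) := by
    rw [show (fun x ↦ N x i) = (√(p i) : ℂ) • φ i from rfl, vecState_smul, Complex.star_def,
      Complex.conj_ofReal, ← Complex.ofReal_mul, Real.mul_self_sqrt (hp i)]
  have hN : ptrace2 (vecState Ψ) = N * Nᴴ := by
    rw [hpur, ← hens]
    simpa [hcol] using (mul_diagonal_mul_conjTranspose_eq_sum_vecState N 1).symm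
  obtain ⟨P, ⟨hH, hI, hO, hS⟩, hP⟩ := exists_isVNMeas_ptrace2_eq_vecState
    (Function.leftInverse_invFun (Fin.castLE_injective hk)) Ψ N hN
  refine ⟨P, hH, hI, hO, hS, fun i ↦ (hP i).trans (hcol i), fun i ↦ ?_⟩
  rw [← trace_ptrace2, hP i, hcol i, trace_smul, trace_vecState, hφ i, smul_eq_mul, mul_one]

/-- Given a purification `Ψ ∈ ℂ^m ⊗ ℂ^n ⊗ ℂ^d` of `ρ_AB` and an
ensemble of at most `d` pure states realizing `ρ_AB`, there is a von Neumann
measurement on the purifying system realizing that ensemble. -/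
theorem exists_vn_measurement_realizing_ensemble (m n d k : ℕ) (hk : k ≤ d)
    (ρAB : Matrix (Fin m × Fin n) (Fin m × Fin n) ℂ) (hρ : IsState ρAB)
    (Ψ : (Fin m × Fin n) × Fin d → ℂ) (hΨ : star Ψ ⬝ᵥ Ψ = 1)
    (hpur : ptrace2 (vecState Ψ) = ρAB)
    (p : Fin k → ℝ) (φ : Fin k → Fin m × Fin n → ℂ)
    (hp : ∀ i, 0 ≤ p i) (hφ : ∀ i, star (φ i) ⬝ᵥ φ i = 1)
    (hens : ∑ i, (p i : ℂ) • vecState (φ i) = ρAB) :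
    ∃ P : Fin k → Matrix (Fin d) (Fin d) ℂ,
      (∀ i, (P i).IsHermitian) ∧ (∀ i, P i * P i = P i) ∧
      (∀ i j, i ≠ j → P i * P j = 0) ∧ (∑ i, P i) = 1 ∧
      (∀ i, ptrace2 (vecState Ψ * ((1 : Matrix (Fin m × Fin n) (Fin m × Fin n) ℂ) ⊗ₖ P i))
        = (p i : ℂ) • vecState (φ i)) ∧
      (∀ i, Matrix.trace (vecState Ψ * ((1 : Matrix (Fin m × Fin n) (Fin m × Fin n) ℂ) ⊗ₖ P i))
        = (p i : ℂ)) :=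
  exists_vn_measurement_realizing_ensemble_general m n d k hk ρAB hρ Ψ hpur p φ hp hφ hens
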